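/- arXiv:1311.0941 — 2 statements merged into one kernel-verified Lean document; each statement's English description precedes it below -/
import Mathlib

section
/- For the incentive process, the state ā is a fixed point of the expected-distribution map E (i.e., E(ā) = ā) if and only if ā = p(ā), i.e., ā is an ISS candidate. -/
open Finset

/-- The vector `i_{αβ}`: +1 at index `α`, −1 at index `β`, 0 elsewhere. -/
def ivec {n : ℕ} (α β : Fin n) : Fin n → ℝ :=
  fun i => (if i = α then (1 : ℝ) else 0) - (if i = β then (1 : ℝ) else 0)

/-- For the incentive process, `ā` is a fixed point of the expected-distribution map `E`
iff `ā = p(ā)`, i.e. iff `ā` is an ISS candidate. -/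
theorem fixed_point_iff_ISS_candidate
    {n N : ℕ} (hn : 0 < n) (hN : 0 < N)
    (a : Fin n → ℕ) (ha : ∑ i, a i = N)
    (abar : Fin n → ℝ) (habar : ∀ i, abar i = (a i : ℝ) / N)
    (p : Fin n → ℝ) (hp0 : ∀ i, 0 ≤ p i) (hp1 : ∑ i, p i = 1)
    (E : Fin n → ℝ)
    (hE : ∀ i, E i = (1 / (N : ℝ)) *
      ∑ α, ∑ β, (p α * abar β) * ((a i : ℝ) + ivec α β i)) :
    (∀ i, E i = abar i) ↔ (∀ i, abar i = p i) := by
  have hNR : (N : ℝ) ≠ 0 := Nat.cast_ne_zero.mpr hN.ne'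
  have hsabar : ∑ j, abar j = 1 := by
    have : ∑ j, abar j = (∑ j, (a j : ℝ)) / N := by
      rw [Finset.sum_div]; exact Finset.sum_congr rfl fun j _ => habar j
    rw [this, ← Nat.cast_sum, ha, div_self hNR]
  have key : ∀ i, E i = abar i + (p i - abar i) / N := by
    intro i
    have h1 : ∀ α : Fin n, ∑ β, (p α * abar β) * ((a i : ℝ) + ivec α β i)
        = p α * (a i : ℝ) + p α * (if i = α then (1:ℝ) else 0) - p α * abar i := by
      intro α
      have : ∀ β : Fin n, (p α * abar β) * ((a i : ℝ) + ivec α β i)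
          = (p α * (a i : ℝ)) * abar β + (p α * (if i = α then (1:ℝ) else 0)) * abar β
            - p α * (abar β * (if i = β then (1:ℝ) else 0)) := by
        intro β; simp only [ivec]; ring
      rw [Finset.sum_congr rfl fun β _ => this β, Finset.sum_sub_distrib,
        Finset.sum_add_distrib, ← Finset.mul_sum, ← Finset.mul_sum, ← Finset.mul_sum,
        hsabar]
      have : ∑ β, abar β * (if i = β then (1:ℝ) else 0) = abar i := by
        simp
      rw [this]; ring
    have h2 : ∑ α, ∑ β, (p α * abar β) * ((a i : ℝ) + ivec α β i)
        = (a i : ℝ) + p i - abar i := by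
      rw [Finset.sum_congr rfl fun α _ => h1 α, Finset.sum_sub_distrib,
        Finset.sum_add_distrib, ← Finset.sum_mul, hp1]
      have : ∑ α, p α * (if i = α then (1:ℝ) else 0) = p i := by simp
      rw [this, ← Finset.sum_mul, hp1]; ring
    rw [hE, h2, habar i]; field_simp; ring
  constructor
  · intro h i
    have := key i
    rw [h i] at this
    have h2 : (p i - abar i) / N = 0 := by linarith
    have := (div_eq_zero_iff.mp h2).resolve_right hNR
    linarith
  · intro h i
    rw [key i, ← h i]; simp
end

section
/- For the two-type incentive process with game matrix entries a=d=0, b=c=1, replicator incentive, and symmetric mutation rate μ ∈ (0,1), the stationary distribution is s_{(0,N)} = s_{(N,0)} = 1/(2 + 2μ(2^N − 2)) and s_{(j,N−j)} = (2μ/(2 + 2μ(2^N − 2)))·C(N,j) for 0 < j < N; in particular, for N ≥ 2 and even N, the unique maximum among interior states occurs at j = N/2. -/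
/-!
Stationarity minus the row-sum condition says that the net probability flux
`s j * T j (j + 1) - s (j + 1) * T (j + 1) j` is the same across every edge of the tridiagonal
chain; at the left end it vanishes, so detailed balance holds. With the interior rates it reads
`s (k + 1) * (k + 1) = s k * (N - k)`, the recurrence of `N.choose`, so `s j = c * N.choose j`
inside; the boundary rate `μ` gives `c = 2 * μ * s 0` and `s N = s 0`, and
`∑ N.choose j = 2 ^ N` normalises. The maximum at `N / 2` is strict unimodality of `N.choose`
for even `N`.
-/

open Finset

namespace Nat

theorem choose_lt_succ_of_lt_half_left {r n : ℕ} (h : r < n / 2) :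
    n.choose r < n.choose (r + 1) := by
  refine Nat.lt_of_mul_lt_mul_right (a := n - r) ?_
  rw [← choose_succ_right_eq]
  exact Nat.mul_lt_mul_of_pos_left (by omega) (choose_pos (by omega))

theorem choose_lt_middle_of_even {n r : ℕ} (hn : Even n) (hr : r ≤ n) (hne : r ≠ n / 2) :
    n.choose r < n.choose (n / 2) := by
  have hmono : StrictMonoOn n.choose (Set.Iic (n / 2)) :=
    strictMonoOn_Iic_of_lt_succ fun m hm => choose_lt_succ_of_lt_half_left hm
  have hlt : ∀ k < n / 2, n.choose k < n.choose (n / 2) := fun k hk =>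
    hmono (Set.mem_Iic.2 hk.le) Set.self_mem_Iic hk
  obtain ⟨m, rfl⟩ := hn
  rcases lt_or_gt_of_ne hne with h | h
  · exact hlt r h
  · rw [← choose_symm hr]
    exact hlt _ (by omega)

theorem cast_choose_succ_mul {R : Type*} [CommRing R] (n k : ℕ) :
    (n.choose (k + 1) : R) * (k + 1) = n.choose k * (n - k) := by
  rcases le_or_gt k n with hk | hk
  · have h := congrArg (Nat.cast : ℕ → R) (choose_succ_right_eq n k)
    push_cast [Nat.cast_sub hk] at h
    exact h
  · simp [choose_eq_zero_of_lt hk, choose_eq_zero_of_lt (hk.trans k.lt_succ_self)]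

end Nat

theorem Finset.sum_range_succ_eq_add_sum_Ioo_add {M : Type*} [AddCommMonoid M] {N : ℕ}
    (hN : 0 < N) (f : ℕ → M) :
    ∑ i ∈ range (N + 1), f i = f 0 + ∑ i ∈ Ioo 0 N, f i + f N := by
  rw [sum_range_succ, range_eq_Ico, ← Ioo_insert_left hN, sum_insert left_notMem_Ioo]

theorem Nat.sum_Ioo_choose {R : Type*} [CommRing R] {n : ℕ} (hn : 0 < n) :
    ∑ i ∈ Ioo 0 n, (n.choose i : R) = 2 ^ n - 2 := by
  have h := congrArg (Nat.cast : ℕ → R) (Nat.sum_range_choose n)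
  rw [Nat.cast_sum, sum_range_succ_eq_add_sum_Ioo_add hn] at h
  push_cast at h
  simp only [Nat.choose_zero_right, Nat.choose_self, Nat.cast_one] at h
  linear_combination h

theorem eq_mul_choose_of_mul_succ_eq {K : Type*} [Field K] [CharZero K] {N a b : ℕ}
    {x : ℕ → K} {c : K}
    (hrec : ∀ k, a ≤ k → k < b → x (k + 1) * (k + 1) = x k * (N - k))
    (ha : x a = c * N.choose a) : ∀ k, a ≤ k → k ≤ b → x k = c * N.choose k := by
  intro k hak
  induction k, hak using Nat.le_induction with
  | base => exact fun _ => ha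
  | succ k hak ih =>
    intro hkb
    refine mul_right_cancel₀ (Nat.cast_add_one_ne_zero k) ?_
    rw [hrec k hak (by omega), ih (by omega), mul_assoc, ← Nat.cast_choose_succ_mul]
    ring

section BirthDeath

variable {R : Type*} [CommRing R] {N : ℕ} {T : ℕ → ℕ → R} {s : ℕ → R}

theorem sum_range_eq_sum_Icc_of_tridiagonal {M : Type*} [AddCommMonoid M] {j : ℕ} (hj : j < N)
    {g : ℕ → M} (hg : ∀ i ≤ N, 1 < max (i - j) (j - i) → g i = 0) :
    ∑ i ∈ range (N + 1), g i = ∑ i ∈ Icc (j - 1) (j + 1), g i := by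
  refine (sum_subset (fun i hi => ?_) fun i hi hni => hg i ?_ ?_).symm
  · simp only [mem_Icc, mem_range] at hi ⊢; omega
  · simp only [mem_range] at hi; omega
  · simp only [mem_Icc] at hni; omega

theorem sum_flux_eq_zero (hrow : ∀ i ≤ N, ∑ j ∈ range (N + 1), T i j = 1)
    (hstat : ∀ j ≤ N, ∑ i ∈ range (N + 1), s i * T i j = s j) {j : ℕ} (hj : j ≤ N) :
    ∑ i ∈ range (N + 1), (s i * T i j - s j * T j i) = 0 := by
  rw [sum_sub_distrib, ← mul_sum, hstat j hj, hrow j hj, mul_one, sub_self]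

theorem detailed_balance_of_tridiagonal
    (htri : ∀ i j, i ≤ N → j ≤ N → 1 < max (i - j) (j - i) → T i j = 0)
    (hrow : ∀ i ≤ N, ∑ j ∈ range (N + 1), T i j = 1)
    (hstat : ∀ j ≤ N, ∑ i ∈ range (N + 1), s i * T i j = s j) :
    ∀ j < N, s j * T j (j + 1) = s (j + 1) * T (j + 1) j := by
  have hlocal : ∀ j < N, ∑ i ∈ Icc (j - 1) (j + 1), (s i * T i j - s j * T j i) = 0 :=
    fun j hj => by
      rw [← sum_range_eq_sum_Icc_of_tridiagonal hj fun i hi hij => by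
        rw [htri i j hi hj.le hij, htri j i hj.le hi (max_comm (i - j) (j - i) ▸ hij)]; ring]
      exact sum_flux_eq_zero hrow hstat hj.le
  intro j hj
  induction j with
  | zero =>
    have h := hlocal 0 hj
    rw [show Icc (0 - 1) (0 + 1) = {0, 1} by decide, sum_pair zero_ne_one] at h
    linear_combination -h
  | succ k ih =>
    have h := hlocal (k + 1) (by omega)
    rw [show Icc (k + 1 - 1) (k + 1 + 1) = {k, k + 1, k + 2} by
        ext; simp only [mem_Icc, mem_insert, mem_singleton]; omega,
      sum_insert (by simp), sum_pair (by simp)] at h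
    linear_combination ih (by omega) - h

end BirthDeath

section IncentiveChain

variable {N : ℕ} {μ : ℝ} {T : ℕ → ℕ → ℝ} {s : ℕ → ℝ}

theorem stationary_interior_eq_mul_choose (hN : 1 < N)
    (hbal : ∀ j < N, s j * T j (j + 1) = s (j + 1) * T (j + 1) j) (hT01 : T 0 1 = μ)
    (hTup : ∀ j, 0 < j → j < N → T j (j + 1) = ((N : ℝ) - j) / (2 * N))
    (hTdown : ∀ j, 0 < j → j < N → T j (j - 1) = (j : ℝ) / (2 * N)) :
    ∀ j, 0 < j → j < N → s j = 2 * μ * s 0 * N.choose j := by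
  have hN0 : (N : ℝ) ≠ 0 := by positivity
  have hbase : s 1 = 2 * μ * s 0 * N.choose 1 := by
    have h := hbal 0 (by omega)
    rw [hT01, zero_add, hTdown 1 one_pos hN, Nat.cast_one] at h
    rw [Nat.choose_one_right]
    field_simp at h
    linear_combination -h
  refine fun j hj0 hjN =>
    eq_mul_choose_of_mul_succ_eq (b := N - 1) (fun k hk hkN => ?_) hbase j hj0 (by omega)
  have hdown := hTdown (k + 1) (by omega) (by omega)
  rw [Nat.add_sub_cancel] at hdown
  have h := hbal k (by omega)
  rw [hTup k hk (by omega), hdown] at h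
  field_simp at h
  push_cast at h
  linear_combination -h

theorem stationary_last_eq_first (hN : 1 < N) (hμ : μ ≠ 0)
    (hbal : ∀ j < N, s j * T j (j + 1) = s (j + 1) * T (j + 1) j) (hTN : T N (N - 1) = μ)
    (hTup : ∀ j, 0 < j → j < N → T j (j + 1) = ((N : ℝ) - j) / (2 * N))
    (hint : s (N - 1) = 2 * μ * s 0 * N.choose (N - 1)) :
    s N = s 0 := by
  have h := hbal (N - 1) (by omega)
  rw [hTup (N - 1) (by omega) (by omega), Nat.sub_add_cancel hN.le, hTN, hint,
    Nat.choose_symm hN.le, Nat.choose_one_right, Nat.cast_sub hN.le] at h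
  have hN0 : (N : ℝ) ≠ 0 := by positivity
  field_simp at h
  linear_combination -h

end IncentiveChain

theorem stationary_distribution_closed_form_general
    {N : ℕ} (hN : 2 ≤ N) (μ : ℝ) (hμ0 : 0 < μ)
    (T : ℕ → ℕ → ℝ) (s : ℕ → ℝ)
    (htri : ∀ i j, i ≤ N → j ≤ N → 1 < max (i - j) (j - i) → T i j = 0)
    (hrow : ∀ i, i ≤ N → ∑ j ∈ Finset.range (N + 1), T i j = 1)
    (hT01 : T 0 1 = μ) (hTN : T N (N - 1) = μ)
    (hTup : ∀ j, 0 < j → j < N → T j (j + 1) = ((N : ℝ) - j) / (2 * N))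
    (hTdown : ∀ j, 0 < j → j < N → T j (j - 1) = (j : ℝ) / (2 * N))
    (hs1 : ∑ i ∈ Finset.range (N + 1), s i = 1)
    (hstat : ∀ j, j ≤ N → ∑ i ∈ Finset.range (N + 1), s i * T i j = s j) :
    s 0 = 1 / (2 + 2 * μ * (2 ^ N - 2)) ∧
    s N = 1 / (2 + 2 * μ * (2 ^ N - 2)) ∧
    (∀ j, 0 < j → j < N → s j = (2 * μ / (2 + 2 * μ * (2 ^ N - 2))) * (N.choose j)) ∧
    (Even N → ∀ j, 0 < j → j < N → j ≠ N / 2 → s j < s (N / 2)) := by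
  have hbal := detailed_balance_of_tridiagonal htri hrow hstat
  have hint := stationary_interior_eq_mul_choose hN hbal hT01 hTup hTdown
  have hsN := stationary_last_eq_first hN hμ0.ne' hbal hTN hTup
    (hint (N - 1) (by omega) (by omega))
  have hD : 0 < 2 + 2 * μ * ((2 : ℝ) ^ N - 2) := by
    have : (2 : ℝ) ^ 1 ≤ 2 ^ N := pow_le_pow_right₀ one_le_two (by omega)
    nlinarith
  have hs0 : s 0 = 1 / (2 + 2 * μ * (2 ^ N - 2)) := by
    rw [sum_range_succ_eq_add_sum_Ioo_add (by omega),
      sum_congr rfl fun i hi => hint i (mem_Ioo.1 hi).1 (mem_Ioo.1 hi).2, ← mul_sum,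
      Nat.sum_Ioo_choose (by omega), hsN] at hs1
    rw [eq_div_iff hD.ne']
    linear_combination hs1
  refine ⟨hs0, hsN.trans hs0, fun j hj0 hjN => by rw [hint j hj0 hjN, hs0]; ring, ?_⟩
  intro hE j hj0 hjN hne
  rw [hint j hj0 hjN, hint (N / 2) (by omega) (by omega)]
  have : 0 < s 0 := by rw [hs0]; positivity
  gcongr
  exact Nat.choose_lt_middle_of_even hE hjN.le hne

/-- For the two-type incentive process with game matrix `a=d=0, b=c=1`, replicator
incentive and symmetric mutation rate `μ ∈ (0,1)` (a birth-death chain on `{0,…,N}`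
with `T_0^1 = T_N^{N-1} = μ` and interior transitions `T_j^{j±1}` as given), the
stationary distribution is `s_0 = s_N = 1/(2 + 2μ(2^N − 2))` and
`s_j = (2μ/(2 + 2μ(2^N − 2)))·C(N,j)` for `0 < j < N`; in particular for even `N ≥ 2`
the unique maximum among interior states is at `j = N/2`. -/
theorem stationary_distribution_closed_form
    {N : ℕ} (hN : 2 ≤ N) (μ : ℝ) (hμ0 : 0 < μ) (hμ1 : μ < 1)
    (T : ℕ → ℕ → ℝ) (s : ℕ → ℝ)
    (htri : ∀ i j, i ≤ N → j ≤ N → 1 < max (i - j) (j - i) → T i j = 0)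
    (hrow : ∀ i, i ≤ N → ∑ j ∈ Finset.range (N + 1), T i j = 1)
    (hT01 : T 0 1 = μ) (hTN : T N (N - 1) = μ)
    (hTup : ∀ j, 0 < j → j < N → T j (j + 1) = ((N : ℝ) - j) / (2 * N))
    (hTdown : ∀ j, 0 < j → j < N → T j (j - 1) = (j : ℝ) / (2 * N))
    (hs0 : ∀ i, i ≤ N → 0 ≤ s i) (hs1 : ∑ i ∈ Finset.range (N + 1), s i = 1)
    (hstat : ∀ j, j ≤ N → ∑ i ∈ Finset.range (N + 1), s i * T i j = s j) :
    s 0 = 1 / (2 + 2 * μ * (2 ^ N - 2)) ∧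
    s N = 1 / (2 + 2 * μ * (2 ^ N - 2)) ∧
    (∀ j, 0 < j → j < N → s j = (2 * μ / (2 + 2 * μ * (2 ^ N - 2))) * (N.choose j)) ∧
    (Even N → ∀ j, 0 < j → j < N → j ≠ N / 2 → s j < s (N / 2)) :=
  stationary_distribution_closed_form_general hN μ hμ0 T s htri hrow hT01 hTN hTup hTdown hs1 hstat
end
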